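/- arXiv:2504.06855 — 6 statements merged into one kernel-verified Lean document; each statement's English description precedes it below -/
import Mathlib

section
/- Let L/k be a finite Galois extension of fields and let V be a vector space over L equipped with a semilinear action of Gal(L/k), i.e. a group action of Gal(L/k) on V by additive bijections such that σ·(c • v) = σ(c) • (σ·v) for all σ ∈ Gal(L/k), c ∈ L, v ∈ V. Then the natural map V^{Gal(L/k)} ⊗_k L → V, given by w ⊗ λ ↦ λ • w, is an isomorphism of L-vector spaces, where V^{Gal(L/k)} denotes the k-subspace of vectors fixed by every element of Gal(L/k), and L acts on the tensor product through the right-hand factor. -/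
open TensorProduct

universe u v

/-- The `k`-subspace of vectors of `V` fixed by every element of `Gal(L/k)`, for a semilinear
action of `Gal(L/k)` on the `L`-vector space `V`. -/
def galoisFixedPoints (k L V : Type*) [Field k] [Field L] [Algebra k L]
    [AddCommGroup V] [Module k V] [Module L V] [IsScalarTower k L V]
    [DistribMulAction (L ≃ₐ[k] L) V]
    (hsemi : ∀ (σ : L ≃ₐ[k] L) (c : L) (v : V), σ • (c • v) = σ c • (σ • v)) :
    Submodule k V where
  carrier := {v | ∀ σ : L ≃ₐ[k] L, σ • v = v}
  add_mem' := by
    intro a b ha hb σ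
    rw [smul_add, ha σ, hb σ]
  zero_mem' := by
    intro σ
    exact smul_zero σ
  smul_mem' := by
    intro c v hv σ
    rw [← algebraMap_smul L c v, hsemi, AlgEquiv.commutes, hv σ]

/-- The natural map `V^{Gal(L/k)} ⊗[k] L → V`, `w ⊗ λ ↦ λ • w`. -/
noncomputable def galoisDescentMap (k L V : Type*) [Field k] [Field L] [Algebra k L]
    [AddCommGroup V] [Module k V] [Module L V] [IsScalarTower k L V]
    [DistribMulAction (L ≃ₐ[k] L) V]
    (hsemi : ∀ (σ : L ≃ₐ[k] L) (c : L) (v : V), σ • (c • v) = σ c • (σ • v)) :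
    (galoisFixedPoints k L V hsemi) ⊗[k] L →ₗ[k] V :=
  TensorProduct.lift <| LinearMap.mk₂ k
    (fun (w : galoisFixedPoints k L V hsemi) (c : L) => c • (w : V))
    (fun w w' c => by (try dsimp only); rw [Submodule.coe_add, smul_add])
    (fun a w c => by (try dsimp only); rw [Submodule.coe_smul]; exact (smul_comm a c _).symm)
    (fun w c c' => by (try dsimp only); rw [add_smul])
    (fun a w c => by (try dsimp only); rw [smul_assoc])

/-!
Write `Tr_V v = ∑ σ, σ • v`; it lands in the fixed vectors, and on a fixed vector `w` it satisfies
`Tr_V (c • w) = Tr_{L/k}(c) • w`.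

Injectivity: if fixed vectors `w_j` that are independent over `k` satisfy `∑ g_j • w_j = 0` over
`L`, applying `Tr_V (c • ·)` gives `∑ Tr(c g_j) • w_j = 0`, so every `Tr(c g_j)` vanishes, and
nondegeneracy of the trace form forces `g_j = 0`.

Surjectivity: for a `k`-basis `b` of `L` with trace-dual basis `b'`, Dedekind's independence of
characters turns `∑ i, b'_i Tr(b_i x) = x` into `∑ i, b'_i σ(b_i) = δ_{σ,1}`, whence
`v = ∑ i, b'_i • Tr_V (b_i • v)`.
-/

open Module

open scoped Classical in
theorem Module.Basis.sum_traceDual_mul_apply {k L : Type*} [Field k] [Field L] [Algebra k L]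
    [FiniteDimensional k L] [IsGalois k L] {ι : Type*} [Fintype ι] [DecidableEq ι]
    (b : Basis ι k L) (σ : L ≃ₐ[k] L) :
    ∑ i, b.traceDual i * σ (b i) = if σ = 1 then 1 else 0 := by
  have hchar : LinearIndependent L fun τ : L ≃ₐ[k] L => (τ : L → L) :=
    (linearIndependent_monoidHom L L).comp (fun τ : L ≃ₐ[k] L => (τ : L →* L)) fun τ τ' h => by
      ext x; exact DFunLike.congr_fun h x
  have hexpand : ∀ x : L, ∑ τ : L ≃ₐ[k] L, (∑ i, b.traceDual i * τ (b i)) * τ x = x := by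
    intro x
    calc _ = ∑ i, b.traceDual i * ∑ τ : L ≃ₐ[k] L, τ (b i * x) := by
            simp_rw [Finset.sum_mul, Finset.mul_sum, map_mul, mul_assoc]
            exact Finset.sum_comm
      _ = ∑ i, b.traceDual.repr x i • b.traceDual i := by
            simp_rw [← trace_eq_sum_automorphisms, b.traceDual_repr_apply,
              Algebra.traceForm_apply, Algebra.smul_def, mul_comm]
      _ = x := b.traceDual.sum_repr x
  refine Fintype.linearIndependent_iffₛ.1 hchar (fun τ => ∑ i, b.traceDual i * τ (b i))
    (fun τ => if τ = 1 then 1 else 0) (funext fun x => ?_) σ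
  simp only [Finset.sum_apply, Pi.smul_apply, smul_eq_mul, hexpand x, ite_mul, one_mul, zero_mul]
  simp

section

variable {k L V : Type*} [Field k] [Field L] [Algebra k L]
  [AddCommGroup V] [Module k V] [Module L V] [IsScalarTower k L V]
  [DistribMulAction (L ≃ₐ[k] L) V]
  (hsemi : ∀ (σ : L ≃ₐ[k] L) (c : L) (v : V), σ • (c • v) = σ c • (σ • v))

theorem galoisDescentMap_tmul (w : galoisFixedPoints k L V hsemi) (c : L) :
    galoisDescentMap k L V hsemi (w ⊗ₜ c) = c • (w : V) := by
  simp [galoisDescentMap]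

variable [FiniteDimensional k L]

theorem sum_smul_mem_galoisFixedPoints (v : V) :
    ∑ σ : L ≃ₐ[k] L, σ • v ∈ galoisFixedPoints k L V hsemi := by
  intro τ
  rw [Finset.smul_sum]
  exact Fintype.sum_bijective (τ * ·) (Group.mulLeft_bijective τ) _ _ fun σ => (mul_smul τ σ v).symm

variable [IsGalois k L]

theorem sum_smul_smul_of_mem_galoisFixedPoints {w : V} (hw : w ∈ galoisFixedPoints k L V hsemi)
    (c : L) : ∑ σ : L ≃ₐ[k] L, σ • (c • w) = Algebra.trace k L c • w := by
  simp_rw [hsemi, hw _]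
  rw [← Finset.sum_smul, ← trace_eq_sum_automorphisms, algebraMap_smul]

theorem linearIndependent_of_mem_galoisFixedPoints {ι : Type*} {w : ι → V}
    (hw : ∀ i, w i ∈ galoisFixedPoints k L V hsemi) (hli : LinearIndependent k w) :
    LinearIndependent L w := by
  rw [linearIndependent_iff'] at hli ⊢
  intro s g hg i hi
  refine (traceForm_nondegenerate k L).1 (g i) fun c => ?_
  have htrace : ∑ j ∈ s, Algebra.trace k L (g j * c) • w j = 0 := by
    calc ∑ j ∈ s, Algebra.trace k L (g j * c) • w j
        = ∑ σ : L ≃ₐ[k] L, σ • (c • ∑ j ∈ s, g j • w j) := by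
          simp_rw [Finset.smul_sum, smul_smul, mul_comm c]
          rw [Finset.sum_comm]
          exact Finset.sum_congr rfl fun j _ =>
            (sum_smul_smul_of_mem_galoisFixedPoints hsemi (hw j) _).symm
      _ = 0 := by simp [hg]
  exact hli s _ htrace i hi

theorem galoisDescentMap_injective : Function.Injective (galoisDescentMap k L V hsemi) := by
  let bW := Basis.ofVectorSpace k (galoisFixedPoints k L V hsemi)
  let bL := Basis.ofVectorSpace k L
  refine LinearMap.injective_of_linearIndependent (bW.tensorProduct bL).span_eq ?_
  have hWk : LinearIndependent k ((galoisFixedPoints k L V hsemi).subtype ∘ bW) :=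
    bW.linearIndependent.map' _ (galoisFixedPoints k L V hsemi).ker_subtype
  have hW : LinearIndependent L ((galoisFixedPoints k L V hsemi).subtype ∘ bW) :=
    linearIndependent_of_mem_galoisFixedPoints hsemi (fun i => (bW i).2) hWk
  have hcomp : galoisDescentMap k L V hsemi ∘ bW.tensorProduct bL =
      (fun p => bL p.1 • (bW p.2 : V)) ∘ Prod.swap := by
    funext p
    simp only [Function.comp_apply, Basis.tensorProduct_apply', galoisDescentMap_tmul,
      Prod.fst_swap, Prod.snd_swap]
  rw [hcomp]
  exact (linearIndependent_smul bL.linearIndependent hW).comp _ Prod.swap_injective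

theorem galoisDescentMap_surjective : Function.Surjective (galoisDescentMap k L V hsemi) := by
  intro v
  let b := Module.finBasis k L
  let t : Fin (finrank k L) → galoisFixedPoints k L V hsemi := fun i =>
    ⟨_, sum_smul_mem_galoisFixedPoints hsemi (b i • v)⟩
  refine ⟨∑ i, t i ⊗ₜ b.traceDual i, ?_⟩
  calc galoisDescentMap k L V hsemi (∑ i, t i ⊗ₜ b.traceDual i)
      = ∑ σ : L ≃ₐ[k] L, (∑ i, b.traceDual i * σ (b i)) • σ • v := by
        simp_rw [map_sum, galoisDescentMap_tmul, t, Finset.smul_sum, hsemi, smul_smul,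
          Finset.sum_smul]
        exact Finset.sum_comm
    _ = v := by classical simp [b.sum_traceDual_mul_apply]

end

/-- **Semilinear Galois descent for vector spaces.**  Let `L/k` be a finite Galois extension and
`V` an `L`-vector space equipped with a semilinear action of `Gal(L/k)` (a group action by
additive bijections satisfying `σ • (c • v) = σ c • (σ • v)`).  Then the natural map
`V^{Gal(L/k)} ⊗[k] L → V`, `w ⊗ λ ↦ λ • w`, is an isomorphism of `L`-vector spaces, where `L`
acts on the tensor product through the right-hand factor. -/
theorem semilinear_galois_descent (k L : Type u) [Field k] [Field L] [Algebra k L]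
    [FiniteDimensional k L] [IsGalois k L]
    (V : Type v) [AddCommGroup V] [Module k V] [Module L V] [IsScalarTower k L V]
    [DistribMulAction (L ≃ₐ[k] L) V]
    (hsemi : ∀ (σ : L ≃ₐ[k] L) (c : L) (v : V), σ • (c • v) = σ c • (σ • v)) :
    Function.Bijective (galoisDescentMap k L V hsemi) ∧
      ∀ (c μ : L) (w : galoisFixedPoints k L V hsemi),
        galoisDescentMap k L V hsemi (w ⊗ₜ[k] (c * μ)) =
          c • galoisDescentMap k L V hsemi (w ⊗ₜ[k] μ) := by
  refine ⟨⟨galoisDescentMap_injective hsemi, galoisDescentMap_surjective hsemi⟩, fun c μ w => ?_⟩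
  rw [galoisDescentMap_tmul, galoisDescentMap_tmul, mul_smul]
end

section
/- Let X be a scheme of finite type over a field k that is Cohen–Macaulay of relative dimension one over k, i.e. every local ring O_{X,x} is a Cohen–Macaulay local ring and every irreducible component of X has Krull dimension one. Let Z ⊆ X be a closed subset consisting of finitely many points, each of which is a regular point of X (the local ring O_{X,x} is a regular local ring for every x ∈ Z). Then the map C ↦ C ∖ Z is a bijection from the set of connected components of X to the set of connected components of the open subspace X ∖ Z. -/
open AlgebraicGeometry

universe u

/-- `rs` is a regular sequence on `R`: each `rs i` is a nonzerodivisor modulo the ideal generated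
by the previous terms. -/
def IsRegularSequenceOn (R : Type*) [CommRing R] (rs : List R) : Prop :=
  ∀ (i : ℕ) (h : i < rs.length) (x : R),
    rs.get ⟨i, h⟩ * x ∈ Ideal.span {r : R | r ∈ rs.take i} →
      x ∈ Ideal.span {r : R | r ∈ rs.take i}

/-- The depth of `R` with respect to an ideal `I`: the supremum of the lengths of regular
sequences contained in `I`. -/
noncomputable def depthWrt (R : Type*) [CommRing R] (I : Ideal R) : ℕ∞ :=
  sSup {n : ℕ∞ | ∃ rs : List R, (rs.length : ℕ∞) = n ∧ (∀ r ∈ rs, r ∈ I) ∧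
    IsRegularSequenceOn R rs}

/-- A Noetherian local ring is Cohen–Macaulay if its depth (w.r.t. its unique maximal ideal)
equals its Krull dimension. -/
def IsCohenMacaulayLocalRing (R : Type*) [CommRing R] : Prop :=
  IsNoetherianRing R ∧ ∃ m : Ideal R, m.IsMaximal ∧ (∀ m' : Ideal R, m'.IsMaximal → m' = m) ∧
    (depthWrt R m : WithBot ℕ∞) = ringKrullDim R

/-- A regular local ring: a Noetherian local ring whose (unique) maximal ideal can be generated
by dim-many elements. -/
def IsRegularLocalRing' (R : Type*) [CommRing R] : Prop :=
  IsNoetherianRing R ∧ ∃ m : Ideal R, m.IsMaximal ∧ (∀ m' : Ideal R, m'.IsMaximal → m' = m) ∧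
    ∃ s : Finset R, Ideal.span (s : Set R) = m ∧ (s.card : WithBot ℕ∞) = ringKrullDim R

open IsLocalRing Relation TopologicalSpace

/-!
A regular local ring of dimension at most one is a domain: if its maximal ideal `(t)` strictly
contains a prime `q`, then `t ∉ q` gives `q = t q`, so `q = 0` by Nakayama. The stalks of `X`
have dimension at most one, so the generizations of a point `z ∈ Z` form the irreducible set
`Spec O_{X,z}`, and `z` lies on exactly one irreducible component of `X`. A component is an
irreducible closed curve in a Jacobson space, hence infinite, so it is not contained in `Z`.

Now let `C` be a connected component of `X`. It is the union of the finitely many components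
`T ⊆ C`, which are closed, so their intersection graph is connected. Each `T \ Z` is irreducible
and nonempty, and two components meeting at a point meet outside `Z`, since points of `Z` lie on
only one component. Hence `C \ Z` is connected, and it is the connected component of `X \ Z`
through any of its points.
-/

theorem IsLocalRing.eq_bot_of_isPrime_of_maximalIdeal_eq_span_singleton {R : Type*} [CommRing R]
    [IsLocalRing R] [IsNoetherianRing R] {t : R} (ht : maximalIdeal R = Ideal.span {t})
    (q : Ideal R) [hq : q.IsPrime] (hqm : q ≠ maximalIdeal R) : q = ⊥ := by
  have htq : t ∉ q := fun htq => hqm <| le_antisymm (le_maximalIdeal hq.ne_top)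
    (ht ▸ (Ideal.span_singleton_le_iff_mem q).2 htq)
  have hle : q ≤ maximalIdeal R • q := by
    intro x hx
    obtain ⟨y, rfl⟩ := Ideal.mem_span_singleton'.1 (ht ▸ le_maximalIdeal hq.ne_top hx)
    have hy : y ∈ q := (hq.mem_or_mem hx).resolve_right htq
    rw [mul_comm, ← smul_eq_mul]
    exact Submodule.smul_mem_smul (ht ▸ Ideal.mem_span_singleton_self t) hy
  exact Submodule.eq_bot_of_le_smul_of_le_jacobson_bot _ q (IsNoetherian.noetherian q) hle
    (jacobson_eq_maximalIdeal ⊥ bot_ne_top).ge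

theorem IsRegularLocalRing'.isDomain_of_ringKrullDim_le_one {R : Type*} [CommRing R]
    (hR : IsRegularLocalRing' R) (hdim : ringKrullDim R ≤ 1) : IsDomain R := by
  obtain ⟨_, m, hm, hmax, s, hspan, hcard⟩ := hR
  have : IsLocalRing R := .of_unique_max_ideal ⟨m, hm, hmax⟩
  obtain rfl : m = maximalIdeal R := (hmax _ (maximalIdeal.isMaximal R)).symm
  suffices (⊥ : Ideal R).IsPrime from IsDomain.of_bot_isPrime R
  by_cases hprime : ∃ q : Ideal R, q.IsPrime ∧ q ≠ maximalIdeal R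
  · obtain ⟨q, hq, hqm⟩ := hprime
    obtain ⟨t, ht⟩ : ∃ t, maximalIdeal R = Ideal.span {t} := by
      have : s.card ≤ 1 := by exact_mod_cast hcard.trans_le hdim
      obtain ⟨t, hst⟩ := Finset.card_le_one_iff_subset_singleton.1 this
      rcases Finset.subset_singleton_iff.1 hst with rfl | rfl
      · exact ⟨0, by simp [← hspan]⟩
      · exact ⟨t, by simp [← hspan]⟩
    rwa [← eq_bot_of_isPrime_of_maximalIdeal_eq_span_singleton ht q hqm]
  · have : Ring.KrullDimLE 0 R := Ring.krullDimLE_zero_iff.2 fun q hq => by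
      push Not at hprime
      exact hprime q hq ▸ maximalIdeal.isMaximal R
    have : s.card = 0 := Nat.le_zero.1 <| by
      exact_mod_cast hcard.trans_le (Ring.krullDimLE_iff.1 this)
    rw [Finset.card_eq_zero.1 this, Finset.coe_empty, Ideal.span_empty] at hspan
    exact hspan ▸ (maximalIdeal.isMaximal R).isPrime

section Topology

variable {α : Type*} [TopologicalSpace α]

theorem IsIrreducible.preimage_val {S T : Set α} (hS : IsIrreducible S) (hST : S ⊆ T) :
    IsIrreducible ((↑) ⁻¹' S : Set T) := by
  have : IrreducibleSpace S := Subtype.irreducibleSpace hS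
  have := (IrreducibleSpace.isIrreducible_univ S).image _ (continuous_inclusion hST).continuousOn
  rwa [Set.image_univ, Set.range_inclusion] at this

theorem topologicalKrullDim_le_of_forall_mem_irreducibleComponents {n : WithBot ℕ∞}
    (h : ∀ T ∈ irreducibleComponents α, topologicalKrullDim T ≤ n) :
    topologicalKrullDim α ≤ n := by
  refine iSup_le fun p => ?_
  obtain ⟨T, hT, hlast⟩ :=
    exists_mem_irreducibleComponents_subset_of_isIrreducible _ p.last.isIrreducible
  have hsub (i : Fin (p.length + 1)) : (p i : Set α) ⊆ T :=
    Set.Subset.trans (p.monotone (Fin.le_last i)) hlast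
  let q : LTSeries (IrreducibleCloseds T) :=
    { length := p.length
      toFun i := ⟨(↑) ⁻¹' (p i : Set α), (p i).isIrreducible.preimage_val (hsub i),
        (p i).isClosed.preimage continuous_subtype_val⟩
      step i := by
        have hlt : p i.castSucc < p i.succ := p.step i
        refine lt_of_le_of_ne (Set.preimage_mono hlt.le) fun heq => hlt.ne ?_
        rw [Subtype.preimage_val_eq_preimage_val_iff, Set.inter_eq_right.2 (hsub _),
          Set.inter_eq_right.2 (hsub _)] at heq
        exact IrreducibleCloseds.ext heq }
  exact (Order.LTSeries.length_le_krullDim q).trans (h T hT)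

theorem IsClosed.topologicalKrullDim_nonpos_of_finite [JacobsonSpace α] {T : Set α}
    (hT : IsClosed T) (hfin : T.Finite) : topologicalKrullDim T ≤ 0 := by
  have : JacobsonSpace T := JacobsonSpace.of_isClosedEmbedding hT.isClosedEmbedding_subtypeVal
  have : Finite T := hfin
  have : DiscreteTopology T := JacobsonSpace.discreteTopology (Set.toFinite _)
  exact topologicalKrullDim_zero_of_discreteTopology T

theorem eq_closure_setOf_specializes_of_mem_irreducibleComponents [QuasiSober α] {z : α}
    (hz : IsIrreducible {y | y ⤳ z}) {T : Set α} (hT : T ∈ irreducibleComponents α)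
    (hzT : z ∈ T) : T = closure {y | y ⤳ z} := by
  have hgen := hT.1.isGenericPoint_genericPoint (isClosed_of_mem_irreducibleComponents T hT)
  have hTle : T ⊆ closure {y | y ⤳ z} := by
    rw [← hgen.def]
    exact closure_mono (Set.singleton_subset_iff.2 (hgen.specializes hzT))
  exact hTle.antisymm (hT.2 hz.closure hTle)

theorem IsPreirreducible.inter_isOpen {s U : Set α} (hs : IsPreirreducible s) (hU : IsOpen U) :
    IsPreirreducible (s ∩ U) := by
  rintro u v hu hv ⟨a, ⟨has, haU⟩, hau⟩ ⟨b, ⟨hbs, hbU⟩, hbv⟩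
  obtain ⟨w, hws, ⟨hwU, hwu⟩, -, hwv⟩ :=
    hs (U ∩ u) (U ∩ v) (hU.inter hu) (hU.inter hv) ⟨a, has, haU, hau⟩ ⟨b, hbs, hbU, hbv⟩
  exact ⟨w, ⟨hws, hwU⟩, hwu, hwv⟩

theorem IsPreconnected.reflTransGen_of_iUnion {ι : Type*} [Finite ι] {s : ι → Set α}
    (hclosed : ∀ i, IsClosed (s i)) (hne : ∀ i, (s i).Nonempty)
    (hconn : IsPreconnected (⋃ i, s i)) (i j : ι) :
    ReflTransGen (fun i j => (s i ∩ s j).Nonempty) i j := by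
  set S := {j | ReflTransGen (fun i j => (s i ∩ s j).Nonempty) i j}
  have hA : IsClosed (⋃ k ∈ S, s k) := (Set.toFinite S).isClosed_biUnion fun k _ => hclosed k
  have hB : IsClosed (⋃ k ∈ Sᶜ, s k) :=
    (Set.toFinite Sᶜ).isClosed_biUnion fun k _ => hclosed k
  have hcover : (⋃ i, s i) ⊆ (⋃ k ∈ S, s k) ∪ ⋃ k ∈ Sᶜ, s k := by
    rw [← Set.biUnion_union, Set.union_compl_self, Set.biUnion_univ]
  have hdisj : (⋃ i, s i) ∩ ((⋃ k ∈ S, s k) ∩ ⋃ k ∈ Sᶜ, s k) = ∅ := by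
    refine Set.eq_empty_of_forall_notMem fun p ⟨_, hpA, hpB⟩ => ?_
    obtain ⟨k, hk, hpk⟩ := Set.mem_iUnion₂.1 hpA
    obtain ⟨l, hl, hpl⟩ := Set.mem_iUnion₂.1 hpB
    exact hl (hk.tail ⟨p, hpk, hpl⟩)
  obtain ⟨p, hp⟩ := hne j
  rcases isPreconnected_iff_subset_of_disjoint_closed.1 hconn _ _ hA hB hcover hdisj with h | h
  · obtain ⟨k, hk, hpk⟩ := Set.mem_iUnion₂.1 (h (Set.mem_iUnion_of_mem j hp))
    exact ReflTransGen.tail hk ⟨p, hpk, hp⟩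
  · obtain ⟨q, hq⟩ := hne i
    obtain ⟨k, hk, hqk⟩ := Set.mem_iUnion₂.1 (h (Set.mem_iUnion_of_mem i hq))
    exact absurd (ReflTransGen.single ⟨q, hq, hqk⟩) hk

theorem isConnected_connectedComponent_diff {Z : Set α} (hfin : (irreducibleComponents α).Finite)
    (hZ : IsClosed Z) (hnotsub : ∀ T ∈ irreducibleComponents α, ¬T ⊆ Z)
    (hunique : ∀ z ∈ Z, ∀ T ∈ irreducibleComponents α, ∀ T' ∈ irreducibleComponents α,
      z ∈ T → z ∈ T' → T = T')
    (x : α) : IsConnected (connectedComponent x \ Z) := by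
  let ι := {T | T ∈ irreducibleComponents α ∧ T ⊆ connectedComponent x}
  have : Finite ι := hfin.subset (fun _ hT => hT.1)
  have hmem {y : α} (hy : y ∈ connectedComponent x) : irreducibleComponent y ∈ ι :=
    ⟨irreducibleComponent_mem_irreducibleComponents y,
      connectedComponent_eq hy ▸ irreducibleComponent_subset_connectedComponent⟩
  have : Nonempty ι := ⟨⟨_, hmem mem_connectedComponent⟩⟩
  have hcover : ⋃ T : ι, (T : Set α) = connectedComponent x :=
    (Set.iUnion_subset fun T => T.2.2).antisymm fun y hy =>
      Set.mem_iUnion.2 ⟨⟨_, hmem hy⟩, mem_irreducibleComponent⟩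
  have hchain := IsPreconnected.reflTransGen_of_iUnion (s := fun T : ι => (T : Set α))
    (fun T => isClosed_of_mem_irreducibleComponents _ T.2.1) (fun T => T.2.1.1.nonempty)
    (hcover ▸ isPreconnected_connectedComponent)
  have hdiff (T : ι) : ((T : Set α) \ Z).Nonempty := Set.sdiff_nonempty.2 (hnotsub _ T.2.1)
  rw [← hcover, Set.iUnion_sdiff]
  refine IsConnected.iUnion_of_reflTransGen
    (fun T => IsIrreducible.isConnected ⟨hdiff T, T.2.1.1.2.inter_isOpen hZ.isOpen_compl⟩)
    fun T T' => ReflTransGen.mono (fun S S' ⟨p, hpS, hpS'⟩ => ?_) T T' (hchain T T')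
  by_cases hSS' : S = S'
  · subst hSS'
    simpa using hdiff S
  · have hpZ : p ∉ Z := fun hpZ => hSS' (Subtype.ext (hunique p hpZ _ S.2.1 _ S'.2.1 hpS hpS'))
    exact ⟨p, ⟨hpS, hpZ⟩, hpS', hpZ⟩

theorem connectedComponentIn_compl_eq_diff {Z : Set α} {y : α} (hy : y ∉ Z)
    (h : IsPreconnected (connectedComponent y \ Z)) :
    connectedComponentIn Zᶜ y = connectedComponent y \ Z :=
  (Set.subset_sdiff.2 ⟨isPreconnected_connectedComponentIn.subset_connectedComponent
      (mem_connectedComponentIn hy),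
      Set.subset_compl_iff_disjoint_right.1 (connectedComponentIn_subset _ _)⟩).antisymm
    (h.subset_connectedComponentIn ⟨mem_connectedComponent, hy⟩ fun _ hw => hw.2)

theorem bijOn_diff_connectedComponent {Z : Set α}
    (h : ∀ x, IsConnected (connectedComponent x \ Z)) :
    Set.BijOn (fun C : Set α => C \ Z) (Set.range fun x : α => connectedComponent x)
      {D : Set α | ∃ x : α, x ∉ Z ∧ D = connectedComponentIn Zᶜ x} := by
  refine ⟨?_, ?_, ?_⟩
  · rintro _ ⟨x, rfl⟩
    obtain ⟨y, hyC, hyZ⟩ := (h x).nonempty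
    refine ⟨y, hyZ, ?_⟩
    dsimp only
    rw [connectedComponentIn_compl_eq_diff hyZ (connectedComponent_eq hyC ▸ (h x).isPreconnected),
      connectedComponent_eq hyC]
  · rintro _ ⟨x, rfl⟩ _ ⟨x', rfl⟩ heq
    obtain ⟨y, hyC, hyZ⟩ := (h x).nonempty
    dsimp only at heq ⊢
    have hyC' : y ∈ connectedComponent x' \ Z := heq ▸ ⟨hyC, hyZ⟩
    rw [connectedComponent_eq hyC, connectedComponent_eq hyC'.1]
  · rintro _ ⟨x, hx, rfl⟩
    exact ⟨connectedComponent x, ⟨x, rfl⟩,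
      (connectedComponentIn_compl_eq_diff hx (h x).isPreconnected).symm⟩

end Topology

namespace AlgebraicGeometry.Scheme

theorem ringKrullDim_stalk_le_topologicalKrullDim (X : Scheme.{u}) (x : X) :
    ringKrullDim (X.presheaf.stalk x) ≤ topologicalKrullDim X := by
  rw [ringKrullDim_stalk_eq_coheight, topologicalKrullDim,
    Order.krullDim_eq_of_orderIso irreducibleSetEquivPoints]
  exact Order.coheight_le_krullDim x

theorem isIrreducible_setOf_specializes (X : Scheme.{u}) (x : X)
    [IsDomain (X.presheaf.stalk x)] : IsIrreducible {y | y ⤳ x} := by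
  have : IrreducibleSpace (Spec (X.presheaf.stalk x)) :=
    inferInstanceAs (IrreducibleSpace (PrimeSpectrum _))
  rw [← Scheme.range_fromSpecStalk, ← Set.image_univ]
  exact (IrreducibleSpace.isIrreducible_univ _).image _ (X.fromSpecStalk x).continuous.continuousOn

end AlgebraicGeometry.Scheme

theorem connectedComponents_of_remove_finite_regular_points_general
    (k : Type u) [Field k] (X : Scheme.{u})
    (f : X ⟶ Spec (CommRingCat.of k)) [LocallyOfFiniteType f] [QuasiCompact f]
    (hdim : ∀ T ∈ irreducibleComponents X, topologicalKrullDim T = (1 : WithBot ℕ∞))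
    (Z : Set X) (hZc : IsClosed Z) (hZf : Z.Finite)
    (hreg : ∀ x ∈ Z, IsRegularLocalRing' (X.presheaf.stalk x)) :
    Set.BijOn (fun C : Set X => C \ Z) (Set.range fun x : X => connectedComponent x)
      {D : Set X | ∃ x : X, x ∉ Z ∧ D = connectedComponentIn Zᶜ x} := by
  have : JacobsonSpace X := LocallyOfFiniteType.jacobsonSpace f
  have : IsNoetherian X :=
    { toIsLocallyNoetherian := LocallyOfFiniteType.isLocallyNoetherian f
      toCompactSpace := QuasiCompact.compactSpace_of_compactSpace f }
  have hstalk (x : X) : ringKrullDim (X.presheaf.stalk x) ≤ 1 :=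
    (X.ringKrullDim_stalk_le_topologicalKrullDim x).trans
      (topologicalKrullDim_le_of_forall_mem_irreducibleComponents fun T hT => (hdim T hT).le)
  refine bijOn_diff_connectedComponent (isConnected_connectedComponent_diff
    finite_irreducibleComponents_of_isNoetherian hZc (fun T hT hTZ => ?_) ?_)
  · have := (isClosed_of_mem_irreducibleComponents T hT).topologicalKrullDim_nonpos_of_finite
      (hZf.subset hTZ)
    exact absurd this (by rw [hdim T hT]; exact not_le.2 zero_lt_one)
  · intro z hz T hT T' hT' hzT hzT'
    have := (hreg z hz).isDomain_of_ringKrullDim_le_one (hstalk z)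
    have hirr := X.isIrreducible_setOf_specializes z
    rw [eq_closure_setOf_specializes_of_mem_irreducibleComponents hirr hT hzT,
      eq_closure_setOf_specializes_of_mem_irreducibleComponents hirr hT' hzT']

/-- Let `X` be a scheme of finite type over a field `k`, Cohen–Macaulay of relative dimension
one (all stalks are Cohen–Macaulay local rings and all irreducible components of `X` have Krull
dimension one).  Let `Z ⊆ X` be a closed subset consisting of finitely many regular points of
`X`.  Then `C ↦ C \ Z` is a bijection from the set of connected components of `X` to the set of
connected components of `X \ Z`. -/
theorem connectedComponents_of_remove_finite_regular_points
    (k : Type u) [Field k] (X : Scheme.{u})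
    (f : X ⟶ Spec (CommRingCat.of k)) [LocallyOfFiniteType f] [QuasiCompact f]
    (hCM : ∀ x : X, IsCohenMacaulayLocalRing (X.presheaf.stalk x))
    (hdim : ∀ T ∈ irreducibleComponents X, topologicalKrullDim T = (1 : WithBot ℕ∞))
    (Z : Set X) (hZc : IsClosed Z) (hZf : Z.Finite)
    (hreg : ∀ x ∈ Z, IsRegularLocalRing' (X.presheaf.stalk x)) :
    Set.BijOn (fun C : Set X => C \ Z) (Set.range fun x : X => connectedComponent x)
      {D : Set X | ∃ x : X, x ∉ Z ∧ D = connectedComponentIn Zᶜ x} :=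
  connectedComponents_of_remove_finite_regular_points_general k X f hdim Z hZc hZf hreg
end

section
/- Let A be a commutative ring and let B, C be commutative A-algebras that are finite free as A-modules. Then the functor from commutative A-algebras to sets sending an A-algebra D to the set of D-algebra homomorphisms C ⊗_A D → B ⊗_A D is corepresentable by a finitely presented commutative A-algebra: there exist a finitely presented commutative A-algebra R and bijections Hom_{A-alg}(R, D) ≃ Hom_{D-alg}(C ⊗_A D, B ⊗_A D) natural in D. Moreover, the subfunctor sending D to the set of D-algebra isomorphisms C ⊗_A D → B ⊗_A D is likewise corepresentable by a finitely presented commutative A-algebra. -/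
/-!
Fix bases `b` of `B` and `c` of `C`. A `D`-algebra map `C ⊗[A] D → B ⊗[A] D` is the same as an
`A`-algebra map `C → B ⊗[A] D`, i.e. a `c`-indexed family in `B ⊗[A] D` obeying the
multiplication table of `c`. Writing the family in the `D`-basis `b ⊗ 1` turns the table into
finitely many polynomial equations over `A` in the entries of the matrix of the map; the
polynomials are obtained once and for all by evaluating at the generic matrix over
`MvPolynomial (ι × κ) A`. An isomorphism is a pair of such maps with mutually inverse matrices,
which adds the equations `Q * P = 1` and `P * Q = 1`. Finally, the solutions in `D` of finitely
many polynomial equations are the `A`-algebra maps to `D` out of the quotient of the polynomial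
ring by the ideal the equations generate.
-/

open TensorProduct

attribute [local instance] Algebra.TensorProduct.rightAlgebra

universe u

open MvPolynomial

namespace MvPolynomial

variable {A σ τ : Type*} [CommRing A]

abbrev Solutions (q : τ → MvPolynomial σ A) (D : Type*) [CommRing D] [Algebra A D] :=
  {t : σ → D // ∀ l, aeval t (q l) = 0}

lemma forall_aeval_mul_sub_one_eq_zero_iff {S m n : Type*} [CommRing S] [Algebra A S]
    [Fintype n] [DecidableEq m] (P : Matrix m n (MvPolynomial σ A))
    (Q : Matrix n m (MvPolynomial σ A)) (w : σ → S) :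
    (∀ p : m × m, aeval w ((P * Q - 1 : Matrix m m _) p.1 p.2) = 0) ↔
      P.map (aeval w) * Q.map (aeval w) = 1 := by
  have h : (P * Q - 1).map (aeval w) = P.map (aeval w) * Q.map (aeval w) - 1 := by
    rw [Matrix.map_sub _ (map_sub _), Matrix.map_mul, Matrix.map_one _ (map_zero _) (map_one _)]
  rw [← sub_eq_zero, ← h, ← Matrix.ext_iff, Prod.forall]
  rfl

variable [Fintype σ]

noncomputable def spanRenameFin (q : τ → MvPolynomial σ A) :
    Ideal (MvPolynomial (Fin (Fintype.card σ)) A) :=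
  Ideal.span (Set.range fun l => rename (Fintype.equivFin σ) (q l))

lemma aeval_eq_zero_of_mem_spanRenameFin {q : τ → MvPolynomial σ A}
    {D : Type*} [CommRing D] [Algebra A D] {t : σ → D} (ht : ∀ l, aeval t (q l) = 0)
    {p : MvPolynomial (Fin (Fintype.card σ)) A} (hp : p ∈ spanRenameFin q) :
    aeval (t ∘ (Fintype.equivFin σ).symm) p = 0 := by
  refine RingHom.mem_ker.1 (Ideal.span_le.2 ?_ hp)
  rintro _ ⟨l, rfl⟩
  rw [SetLike.mem_coe, RingHom.mem_ker, aeval_rename, Function.comp_assoc,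
    Equiv.symm_comp_self, Function.comp_id, ht]

noncomputable def quotientSpanRenameFinAlgHomEquiv (q : τ → MvPolynomial σ A)
    (D : Type*) [CommRing D] [Algebra A D] :
    (MvPolynomial (Fin (Fintype.card σ)) A ⧸ spanRenameFin q →ₐ[A] D) ≃ Solutions q D where
  toFun ψ := ⟨(ψ.comp (Ideal.Quotient.mkₐ A _)).comp (rename (Fintype.equivFin σ)) ∘ X,
    fun l => by
      have hl : rename (Fintype.equivFin σ) (q l) ∈ spanRenameFin q :=
        Ideal.subset_span (Set.mem_range_self l)
      rw [← aeval_unique, AlgHom.comp_apply, AlgHom.comp_apply, Ideal.Quotient.mkₐ_eq_mk,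
        Ideal.Quotient.eq_zero_iff_mem.2 hl, map_zero]⟩
  invFun t := Ideal.Quotient.liftₐ _ (aeval (t.1 ∘ (Fintype.equivFin σ).symm))
    fun _ => aeval_eq_zero_of_mem_spanRenameFin t.2
  left_inv ψ := Ideal.Quotient.algHom_ext A <| by
    rw [Ideal.Quotient.liftₐ_comp]
    exact algHom_ext fun i => by simp
  right_inv t := Subtype.ext <| by
    dsimp only
    rw [Ideal.Quotient.liftₐ_comp]
    exact _root_.funext fun x => by simp

lemma quotientSpanRenameFinAlgHomEquiv_comp (q : τ → MvPolynomial σ A)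
    {D D' : Type*} [CommRing D] [Algebra A D] [CommRing D'] [Algebra A D'] (φ : D →ₐ[A] D')
    (ψ : MvPolynomial (Fin (Fintype.card σ)) A ⧸ spanRenameFin q →ₐ[A] D) :
    (quotientSpanRenameFinAlgHomEquiv q D' (φ.comp ψ)).1 =
      φ ∘ (quotientSpanRenameFinAlgHomEquiv q D ψ).1 := rfl

end MvPolynomial

namespace AlgHom

section LiftEquivRight

variable {A C D E : Type*} [CommRing A] [Ring C] [Algebra A C] [CommRing D] [Algebra A D]
  [Ring E] [Algebra A E] [Algebra D E] [IsScalarTower A D E]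

noncomputable def liftEquivRight : (C →ₐ[A] E) ≃ (C ⊗[A] D →ₐ[D] E) :=
  (liftEquiv A D C E).trans ((Algebra.TensorProduct.commRight A D C).arrowCongr AlgEquiv.refl)

@[simp]
lemma liftEquivRight_tmul_one (f : C →ₐ[A] E) (x : C) :
    liftEquivRight (D := D) f (x ⊗ₜ 1) = f x := by
  simp [liftEquivRight, AlgEquiv.arrowCongr]

end LiftEquivRight

lemma comp_eq_id_iff_toMatrix_mul_eq_one {R S T m n : Type*} [CommRing R] [Ring S] [Ring T]
    [Algebra R S] [Algebra R T] [Fintype m] [DecidableEq m] [Fintype n] [DecidableEq n]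
    (bS : Module.Basis m R S) (bT : Module.Basis n R T) (f : S →ₐ[R] T) (g : T →ₐ[R] S) :
    g.comp f = AlgHom.id R S ↔
      LinearMap.toMatrix bT bS g.toLinearMap * LinearMap.toMatrix bS bT f.toLinearMap = 1 := by
  rw [← LinearMap.toMatrix_comp, ← LinearMap.toMatrix_id bS,
    (LinearMap.toMatrix bS bS).injective.eq_iff, ← comp_toLinearMap, ← toLinearMap_id,
    toLinearMap_injective.eq_iff]

end AlgHom

namespace Module.Basis

section TensorRight

variable {A B ι : Type*} [CommRing A] [Ring B] [Algebra A B]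

noncomputable def tensorRight (D : Type*) [CommRing D] [Algebra A D] (b : Basis ι A B) :
    Basis ι D (B ⊗[A] D) :=
  (Algebra.TensorProduct.basis D b).map (Algebra.TensorProduct.commRight A D B).toLinearEquiv

variable {D D' : Type*} [CommRing D] [Algebra A D] [CommRing D'] [Algebra A D']

@[simp]
lemma tensorRight_apply (b : Basis ι A B) (i : ι) : b.tensorRight D i = b i ⊗ₜ 1 := by
  simp [tensorRight]

@[simp]
lemma tensorRight_repr_tmul (b : Basis ι A B) (x : B) (d : D) (i : ι) :
    (b.tensorRight D).repr (x ⊗ₜ d) i = b.repr x i • d := by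
  simp [tensorRight, Algebra.TensorProduct.basis_repr_tmul, Algebra.smul_def, mul_comm]

lemma tensorRight_repr_map (b : Basis ι A B) (φ : D →ₐ[A] D') (x : B ⊗[A] D) (i : ι) :
    (b.tensorRight D').repr (Algebra.TensorProduct.map (AlgHom.id A B) φ x) i =
      φ ((b.tensorRight D).repr x i) := by
  induction x with
  | zero => simp
  | tmul x d => simp
  | add x y hx hy => simp [hx, hy]

end TensorRight

section MulTable

variable {A C κ : Type*} [CommRing A] [Ring C] [Algebra A C]

noncomputable def mulTableRel (c : Basis κ A C) : κ × κ ⊕ Unit → MvPolynomial κ A :=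
  Sum.elim
    (fun jk => c.constr A (X : κ → MvPolynomial κ A) (c jk.1 * c jk.2) - X jk.1 * X jk.2)
    fun _ => c.constr A (X : κ → MvPolynomial κ A) 1 - 1

variable {E : Type*} [CommRing E] [Algebra A E]

lemma aeval_constr_X (c : Basis κ A C) (v : κ → E) (x : C) :
    aeval v (c.constr A (X : κ → MvPolynomial κ A) x) = c.constr A v x := by
  rw [← AlgHom.toLinearMap_apply, ← LinearMap.comp_apply]
  congr 1
  exact c.ext fun j => by simp

lemma forall_aeval_mulTableRel_eq_zero_iff (c : Basis κ A C) (v : κ → E) :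
    (∀ s, aeval v (c.mulTableRel s) = 0) ↔
      (∀ j k, c.constr A v (c j * c k) = v j * v k) ∧ c.constr A v 1 = 1 := by
  simp only [Sum.forall, Prod.forall, mulTableRel, Sum.elim_inl, Sum.elim_inr, map_sub, map_mul,
    map_one, aeval_X, aeval_constr_X, sub_eq_zero, forall_const]

variable (E) in
noncomputable def algHomEquiv (c : Basis κ A C) :
    (C →ₐ[A] E) ≃ Solutions c.mulTableRel E where
  toFun f := ⟨f ∘ c, by
    have hf : c.constr A (f ∘ c) = f.toLinearMap := c.constr_self A f.toLinearMap
    rw [forall_aeval_mulTableRel_eq_zero_iff, hf]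
    simp⟩
  invFun v :=
    have hv := (c.forall_aeval_mulTableRel_eq_zero_iff v.1).1 v.2
    AlgHom.ofLinearMap (c.constr A v.1) hv.2 fun x y => by
      rw [← LinearMap.mul_apply_apply A, ← LinearMap.compr₂_apply,
        ← LinearMap.mul_apply_apply A, ← LinearMap.compl₁₂_apply]
      congr 2
      exact c.ext fun j => c.ext fun k => by simp [hv.1]
  left_inv f := AlgHom.toLinearMap_injective (c.constr_self A f.toLinearMap)
  right_inv v := Subtype.ext (funext fun j => c.constr_basis A v.1 j)

@[simp]
lemma algHomEquiv_symm_apply (c : Basis κ A C) (v : Solutions c.mulTableRel E) (x : C) :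
    (c.algHomEquiv E).symm v x = c.constr A v.1 x := rfl

end MulTable

section Coordinates

variable {A B ι κ : Type*} [CommRing A] [CommRing B] [Algebra A B] [Fintype ι]
variable (D : Type*) [CommRing D] [Algebra A D] {D' : Type*} [CommRing D'] [Algebra A D']

noncomputable def coordEquiv (b : Basis ι A B) : (κ → B ⊗[A] D) ≃ (ι × κ → D) where
  toFun v p := (b.tensorRight D).repr (v p.2) p.1
  invFun t j := (b.tensorRight D).equivFun.symm fun i => t (i, j)
  left_inv v := funext fun j => (b.tensorRight D).equivFun.symm_apply_apply (v j)
  right_inv t := funext fun p =>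
    congrFun ((b.tensorRight D).equivFun.apply_symm_apply fun i => t (i, p.2)) p.1

variable {D}

@[simp]
lemma repr_coordEquiv_symm (b : Basis ι A B) (t : ι × κ → D) (i : ι) (j : κ) :
    (b.tensorRight D).repr ((b.coordEquiv D).symm t j) i = t (i, j) :=
  congrFun ((b.tensorRight D).equivFun.apply_symm_apply _) i

lemma map_coordEquiv_symm (b : Basis ι A B) (φ : D →ₐ[A] D') (t : ι × κ → D) (j : κ) :
    Algebra.TensorProduct.map (AlgHom.id A B) φ ((b.coordEquiv D).symm t j) =
      (b.coordEquiv D').symm (φ ∘ t) j :=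
  (b.tensorRight D').ext_elem fun i => by simp [tensorRight_repr_map]

noncomputable def coordPoly (b : Basis ι A B) (p : MvPolynomial κ A) (i : ι) :
    MvPolynomial (ι × κ) A :=
  (b.tensorRight _).repr (aeval ((b.coordEquiv _).symm X) p) i

lemma aeval_coordPoly (b : Basis ι A B) (t : ι × κ → D) (p : MvPolynomial κ A) (i : ι) :
    aeval t (b.coordPoly p i) = (b.tensorRight D).repr (aeval ((b.coordEquiv D).symm t) p) i := by
  have h : (fun j => Algebra.TensorProduct.map (AlgHom.id A B) (aeval t)
      ((b.coordEquiv _).symm X j)) = (b.coordEquiv D).symm t := by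
    funext j
    rw [map_coordEquiv_symm, show ⇑(aeval t) ∘ X = t from funext (aeval_X t)]
  rw [coordPoly, ← tensorRight_repr_map, comp_aeval_apply, h]

lemma forall_aeval_coordPoly_eq_zero_iff (b : Basis ι A B) (t : ι × κ → D)
    (p : MvPolynomial κ A) :
    (∀ i, aeval t (b.coordPoly p i) = 0) ↔ aeval ((b.coordEquiv D).symm t) p = 0 := by
  simp_rw [aeval_coordPoly, (b.tensorRight D).ext_elem_iff (y := 0), map_zero,
    Finsupp.zero_apply]

end Coordinates

end Module.Basis

section HomFunctor

open Module

variable {A B C ι κ : Type*} [CommRing A] [CommRing B] [Algebra A B] [CommRing C] [Algebra A C]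
  [Fintype ι] (b : Basis ι A B) (c : Basis κ A C)

noncomputable def baseChangeAlgHomRel (l : (κ × κ ⊕ Unit) × ι) : MvPolynomial (ι × κ) A :=
  b.coordPoly (c.mulTableRel l.1) l.2

variable (D : Type*) [CommRing D] [Algebra A D] {D' : Type*} [CommRing D'] [Algebra A D']

noncomputable def baseChangeAlgHomEquiv :
    (C ⊗[A] D →ₐ[D] B ⊗[A] D) ≃ Solutions (baseChangeAlgHomRel b c) D :=
  AlgHom.liftEquivRight.symm.trans <| (c.algHomEquiv _).trans <|
    (b.coordEquiv D).subtypeEquiv fun v => by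
      simp only [baseChangeAlgHomRel, Prod.forall, Basis.forall_aeval_coordPoly_eq_zero_iff,
        Equiv.symm_apply_apply]

variable {D}

lemma baseChangeAlgHomEquiv_apply (F : C ⊗[A] D →ₐ[D] B ⊗[A] D) (i : ι) (j : κ) :
    (baseChangeAlgHomEquiv b c D F).1 (i, j) = (b.tensorRight D).repr (F (c j ⊗ₜ 1)) i := rfl

lemma baseChangeAlgHomEquiv_symm_apply_tmul_one (t : Solutions (baseChangeAlgHomRel b c) D)
    (x : C) :
    (baseChangeAlgHomEquiv b c D).symm t (x ⊗ₜ 1) =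
      c.constr A ((b.coordEquiv D).symm t.1) x := by
  simp [baseChangeAlgHomEquiv]

lemma baseChangeAlgHomEquiv_symm_apply_tmul_one_of_eq_comp (φ : D →ₐ[A] D')
    (t : Solutions (baseChangeAlgHomRel b c) D) (t' : Solutions (baseChangeAlgHomRel b c) D')
    (h : t'.1 = φ ∘ t.1) (x : C) :
    (baseChangeAlgHomEquiv b c D').symm t' (x ⊗ₜ 1) =
      Algebra.TensorProduct.map (AlgHom.id A B) φ
        ((baseChangeAlgHomEquiv b c D).symm t (x ⊗ₜ 1)) := by
  rw [baseChangeAlgHomEquiv_symm_apply_tmul_one, baseChangeAlgHomEquiv_symm_apply_tmul_one, h,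
    ← AlgHom.toLinearMap_apply, ← LinearMap.comp_apply]
  congr 1
  exact c.ext fun j => by
    rw [LinearMap.comp_apply, Basis.constr_basis, Basis.constr_basis, AlgHom.toLinearMap_apply,
      Basis.map_coordEquiv_symm]

lemma toMatrix_eq_baseChangeAlgHomEquiv [Fintype κ] [DecidableEq κ]
    (F : C ⊗[A] D →ₐ[D] B ⊗[A] D) :
    LinearMap.toMatrix (c.tensorRight D) (b.tensorRight D) F.toLinearMap =
      Matrix.of (Function.curry (baseChangeAlgHomEquiv b c D F).1) := by
  ext i j
  simp [LinearMap.toMatrix_apply, baseChangeAlgHomEquiv_apply]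

end HomFunctor

section IsoFunctor

open Module

variable {A B C ι κ : Type*} [CommRing A] [CommRing B] [Algebra A B] [CommRing C] [Algebra A C]
  [Fintype ι] [DecidableEq ι] [Fintype κ] [DecidableEq κ] (b : Basis ι A B) (c : Basis κ A C)

noncomputable def baseChangeAlgEquivRel :
    ((κ × κ ⊕ Unit) × ι ⊕ (ι × ι ⊕ Unit) × κ) ⊕ (κ × κ ⊕ ι × ι) →
      MvPolynomial (ι × κ ⊕ κ × ι) A :=
  let P : Matrix ι κ (MvPolynomial (ι × κ ⊕ κ × ι) A) := .of (Function.curry (X ∘ .inl))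
  let Q : Matrix κ ι (MvPolynomial (ι × κ ⊕ κ × ι) A) := .of (Function.curry (X ∘ .inr))
  Sum.elim
    (Sum.elim (fun l => rename .inl (baseChangeAlgHomRel b c l))
      fun l => rename .inr (baseChangeAlgHomRel c b l))
    (Sum.elim (fun p => (Q * P - 1 : Matrix κ κ _) p.1 p.2)
      fun p => (P * Q - 1 : Matrix ι ι _) p.1 p.2)

variable {D : Type*} [CommRing D] [Algebra A D] {D' : Type*} [CommRing D'] [Algebra A D']

lemma forall_aeval_baseChangeAlgEquivRel_eq_zero_iff (w : ι × κ ⊕ κ × ι → D) :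
    (∀ l, aeval w (baseChangeAlgEquivRel b c l) = 0) ↔
      (∀ l, aeval (w ∘ .inl) (baseChangeAlgHomRel b c l) = 0) ∧
      (∀ l, aeval (w ∘ .inr) (baseChangeAlgHomRel c b l) = 0) ∧
      Matrix.of (Function.curry (w ∘ .inr)) * Matrix.of (Function.curry (w ∘ .inl)) = 1 ∧
      Matrix.of (Function.curry (w ∘ .inl)) * Matrix.of (Function.curry (w ∘ .inr)) = 1 := by
  simp only [baseChangeAlgEquivRel, Sum.forall, Sum.elim_inl, Sum.elim_inr, aeval_rename,
    forall_aeval_mul_sub_one_eq_zero_iff]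
  have hP : (Matrix.of (Function.curry (X ∘ .inl : _ → MvPolynomial _ A))).map (aeval w) =
      Matrix.of (Function.curry (w ∘ .inl)) := Matrix.ext fun _ _ => aeval_X w _
  have hQ : (Matrix.of (Function.curry (X ∘ .inr : _ → MvPolynomial _ A))).map (aeval w) =
      Matrix.of (Function.curry (w ∘ .inr)) := Matrix.ext fun _ _ => aeval_X w _
  rw [hP, hQ, and_assoc]

lemma comp_eq_id_iff_baseChangeAlgHomEquiv (F : C ⊗[A] D →ₐ[D] B ⊗[A] D)
    (G : B ⊗[A] D →ₐ[D] C ⊗[A] D) :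
    G.comp F = AlgHom.id D _ ↔
      Matrix.of (Function.curry (baseChangeAlgHomEquiv c b D G).1) *
        Matrix.of (Function.curry (baseChangeAlgHomEquiv b c D F).1) = 1 := by
  rw [AlgHom.comp_eq_id_iff_toMatrix_mul_eq_one (c.tensorRight D) (b.tensorRight D),
    toMatrix_eq_baseChangeAlgHomEquiv, toMatrix_eq_baseChangeAlgHomEquiv]

variable (D) in
noncomputable def baseChangeAlgEquivEquiv :
    (C ⊗[A] D ≃ₐ[D] B ⊗[A] D) ≃ Solutions (baseChangeAlgEquivRel b c) D where
  toFun e := ⟨Sum.elim (baseChangeAlgHomEquiv b c D e).1 (baseChangeAlgHomEquiv c b D e.symm).1,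
    (forall_aeval_baseChangeAlgEquivRel_eq_zero_iff b c _).2
      ⟨(baseChangeAlgHomEquiv b c D e).2, (baseChangeAlgHomEquiv c b D e.symm).2,
        (comp_eq_id_iff_baseChangeAlgHomEquiv b c _ _).1 e.symm_comp,
        (comp_eq_id_iff_baseChangeAlgHomEquiv c b _ _).1 e.comp_symm⟩⟩
  invFun w :=
    have hw := (forall_aeval_baseChangeAlgEquivRel_eq_zero_iff b c w.1).1 w.2
    AlgEquiv.ofAlgHom ((baseChangeAlgHomEquiv b c D).symm ⟨w.1 ∘ .inl, hw.1⟩)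
      ((baseChangeAlgHomEquiv c b D).symm ⟨w.1 ∘ .inr, hw.2.1⟩)
      ((comp_eq_id_iff_baseChangeAlgHomEquiv c b _ _).2 (by simpa using hw.2.2.2))
      ((comp_eq_id_iff_baseChangeAlgHomEquiv b c _ _).2 (by simpa using hw.2.2.1))
  left_inv e := AlgEquiv.ext fun x =>
    DFunLike.congr_fun ((baseChangeAlgHomEquiv b c D).symm_apply_apply e.toAlgHom) x
  right_inv w := Subtype.ext <| funext <| Sum.rec
    (fun p => congrFun (congrArg Subtype.val ((baseChangeAlgHomEquiv b c D).apply_symm_apply _)) p)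
    (fun p => congrFun (congrArg Subtype.val ((baseChangeAlgHomEquiv c b D).apply_symm_apply _)) p)

lemma baseChangeAlgEquivEquiv_symm_apply_tmul_one_of_eq_comp (φ : D →ₐ[A] D')
    (w : Solutions (baseChangeAlgEquivRel b c) D) (w' : Solutions (baseChangeAlgEquivRel b c) D')
    (h : w'.1 = φ ∘ w.1) (x : C) :
    (baseChangeAlgEquivEquiv b c D').symm w' (x ⊗ₜ 1) =
      Algebra.TensorProduct.map (AlgHom.id A B) φ
        ((baseChangeAlgEquivEquiv b c D).symm w (x ⊗ₜ 1)) :=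
  baseChangeAlgHomEquiv_symm_apply_tmul_one_of_eq_comp b c φ _ _ (congrArg (· ∘ Sum.inl) h) x

end IsoFunctor

/-- Let `A` be a commutative ring and `B`, `C` commutative `A`-algebras that are finite free as
`A`-modules.  Then the functor `D ↦ Hom_{D-alg}(C ⊗[A] D, B ⊗[A] D)` is corepresentable by a
finitely presented commutative `A`-algebra (presented as a quotient of a polynomial ring by a
finitely generated ideal), naturally in `D`; and likewise for the subfunctor of isomorphisms. -/
theorem hom_and_iso_functors_corepresentable (A : Type u) [CommRing A]
    (B C : Type u) [CommRing B] [CommRing C] [Algebra A B] [Algebra A C]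
    [Module.Finite A B] [Module.Free A B] [Module.Finite A C] [Module.Free A C] :
    (∃ (n : ℕ) (I : Ideal (MvPolynomial (Fin n) A)), I.FG ∧
      ∃ e : ∀ (D : Type u) [CommRing D] [Algebra A D],
          ((MvPolynomial (Fin n) A ⧸ I) →ₐ[A] D) ≃ ((C ⊗[A] D) →ₐ[D] (B ⊗[A] D)),
        ∀ (D : Type u) [CommRing D] [Algebra A D] (D' : Type u) [CommRing D'] [Algebra A D']
          (φ : D →ₐ[A] D') (ψ : (MvPolynomial (Fin n) A ⧸ I) →ₐ[A] D) (c : C),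
          e D' (φ.comp ψ) (c ⊗ₜ[A] (1 : D')) =
            Algebra.TensorProduct.map (AlgHom.id A B) φ (e D ψ (c ⊗ₜ[A] (1 : D)))) ∧
    (∃ (n : ℕ) (I : Ideal (MvPolynomial (Fin n) A)), I.FG ∧
      ∃ e : ∀ (D : Type u) [CommRing D] [Algebra A D],
          ((MvPolynomial (Fin n) A ⧸ I) →ₐ[A] D) ≃ ((C ⊗[A] D) ≃ₐ[D] (B ⊗[A] D)),
        ∀ (D : Type u) [CommRing D] [Algebra A D] (D' : Type u) [CommRing D'] [Algebra A D']
          (φ : D →ₐ[A] D') (ψ : (MvPolynomial (Fin n) A ⧸ I) →ₐ[A] D) (c : C),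
          e D' (φ.comp ψ) (c ⊗ₜ[A] (1 : D')) =
            Algebra.TensorProduct.map (AlgHom.id A B) φ (e D ψ (c ⊗ₜ[A] (1 : D)))) := by
  classical
  let b := Module.Free.chooseBasis A B
  let c := Module.Free.chooseBasis A C
  refine ⟨⟨_, spanRenameFin (baseChangeAlgHomRel b c), Submodule.fg_span (Set.finite_range _),
      fun D _ _ =>
        (quotientSpanRenameFinAlgHomEquiv _ D).trans (baseChangeAlgHomEquiv b c D).symm,
      fun D _ _ D' _ _ φ ψ x => ?_⟩,
    ⟨_, spanRenameFin (baseChangeAlgEquivRel b c), Submodule.fg_span (Set.finite_range _),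
      fun D _ _ =>
        (quotientSpanRenameFinAlgHomEquiv _ D).trans (baseChangeAlgEquivEquiv b c D).symm,
      fun D _ _ D' _ _ φ ψ x => ?_⟩⟩
  · exact baseChangeAlgHomEquiv_symm_apply_tmul_one_of_eq_comp b c φ _ _
      (quotientSpanRenameFinAlgHomEquiv_comp _ φ ψ) x
  · exact baseChangeAlgEquivEquiv_symm_apply_tmul_one_of_eq_comp b c φ _ _
      (quotientSpanRenameFinAlgHomEquiv_comp _ φ ψ) x
end

section
/- Let (R, m) be a Noetherian local ring with residue field k = R/m, and let A be a commutative R-algebra that is finite and flat as an R-module. If the k-algebra A ⊗_R k is étale over k, then A is étale over R. -/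
open TensorProduct

attribute [local instance] Algebra.TensorProduct.rightAlgebra

universe u

/-- Base change identifies `k ⊗[R] Ω[A⁄R]` with `Ω[(A ⊗[R] k)⁄k] = 0`, and `Ω[A⁄R]` is a finite
`R`-module, so it vanishes by Nakayama's lemma. -/
theorem Algebra.FormallyUnramified.of_formallyUnramified_residueField_tensorProduct
    (R : Type u) [CommRing R] [IsLocalRing R]
    (A : Type u) [CommRing A] [Algebra R A] [Module.Finite R A]
    [FormallyUnramified (IsLocalRing.ResidueField R) (A ⊗[R] IsLocalRing.ResidueField R)] :
    FormallyUnramified R A := by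
  have hfibre : Subsingleton (IsLocalRing.ResidueField R ⊗[R] Ω[A⁄R]) :=
    (KaehlerDifferential.tensorKaehlerEquivBase R (IsLocalRing.ResidueField R) A
      (A ⊗[R] IsLocalRing.ResidueField R)).toEquiv.subsingleton
  have : Module.Finite A Ω[A⁄R] := KaehlerDifferential.finite R A
  have : Module.Finite R Ω[A⁄R] := .trans A Ω[A⁄R]
  exact ⟨IsLocalRing.subsingleton_tensorProduct.mp hfibre⟩

/-- Let `(R, m)` be a Noetherian local ring with residue field `k = R/m` and `A` a commutative
`R`-algebra that is finite and flat as an `R`-module.  If the `k`-algebra `A ⊗[R] k` is étale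
over `k`, then `A` is étale over `R`. -/
theorem etale_of_etale_fibre (R : Type u) [CommRing R] [IsLocalRing R] [IsNoetherianRing R]
    (A : Type u) [CommRing A] [Algebra R A] [Module.Finite R A] [Module.Flat R A]
    (h : Algebra.Etale (IsLocalRing.ResidueField R) (A ⊗[R] IsLocalRing.ResidueField R)) :
    Algebra.Etale R A := by
  have : Algebra.FormallyUnramified R A :=
    .of_formallyUnramified_residueField_tensorProduct R A
  have : Algebra.FinitePresentation R A :=
    Algebra.FinitePresentation.of_finiteType.mp (Module.Finite.finiteType A)
  exact .of_formallyUnramified_of_flat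
end

section
/- Let R be a commutative ring, let f_1, …, f_r ∈ R be elements generating the unit ideal, and let I ⊆ R[x] be an ideal of the polynomial ring in one variable such that, for every i, the ideal generated by the image of I in the localized polynomial ring R_{f_i}[x] contains a monic polynomial. Then I contains a monic polynomial. -/
/-!
The leading coefficients of the elements of `I` form an ideal of `R`, which is the unit ideal
exactly when `I` contains a monic polynomial. Given a monic `q` of degree `d` in the extension of
`I` to `R_f[x]`, clearing denominators gives `p ∈ I` mapping to `f^n q`. The coefficients of `p`
above degree `d` vanish in `R_f` and its coefficient of degree `d` equals `f^n` there; multiplying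
`p` by a suitable power of `f` makes both hold in `R`, so the ideal of leading coefficients
contains a power of `f`. Containing a power of every `f_i`, it is the unit ideal.
-/

universe u

open Polynomial

namespace Ideal

variable {R : Type*} [CommRing R]

theorem coeff_mem_leadingCoeff {I : Ideal R[X]} {p : R[X]} (hp : p ∈ I) {n : ℕ}
    (hn : p.natDegree ≤ n) : p.coeff n ∈ I.leadingCoeff :=
  le_iSup I.leadingCoeffNth n <|
    Submodule.mem_map_of_mem ⟨mem_degreeLE.mpr (natDegree_le_iff_degree_le.mp hn), hp⟩

end Ideal

section Localization

variable {R : Type*} [CommRing R] (M : Submonoid R) {S : Type*} [CommRing S] [Algebra R S]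
  [IsLocalization M S]

attribute [local instance] Polynomial.algebra Polynomial.isLocalization

theorem Ideal.exists_map_eq_C_mul_of_mem_map {I : Ideal R[X]} {q : S[X]}
    (hq : q ∈ I.map (mapRingHom (algebraMap R S))) :
    ∃ p ∈ I, ∃ m ∈ M, p.map (algebraMap R S) = C (algebraMap R S m) * q := by
  obtain ⟨⟨⟨p, hp⟩, ⟨_, m, hm, rfl⟩⟩, h⟩ :=
    (IsLocalization.mem_map_algebraMap_iff (M.map C) S[X]).mp hq
  refine ⟨p, hp, m, hm, ?_⟩
  simpa [algebraMap_def, mul_comm] using h.symm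

theorem IsLocalization.exists_natDegree_C_mul_le (p : R[X]) :
    ∃ m ∈ M, (C m * p).natDegree ≤ (p.map (algebraMap R S)).natDegree := by
  obtain ⟨b, hb, hpb⟩ := integerNormalization_spec M (p.map (algebraMap R S))
  have : algebraMap R[X] S[X] (integerNormalization M (p.map (algebraMap R S))) =
      algebraMap R[X] S[X] (C b * p) := by
    rw [algebraMap_def, coe_mapRingHom, hpb, ← algebraMap_smul S b, smul_eq_C_mul,
      Polynomial.map_mul, map_C]
  obtain ⟨⟨_, c, hc, rfl⟩, hcb⟩ := exists_of_eq (M := M.map C) this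
  refine ⟨c * b, M.mul_mem hc hb, ?_⟩
  rw [C_mul, mul_assoc, ← hcb]
  exact (natDegree_C_mul_le _ _).trans
    (natDegree_le_natDegree (degree_mono (integerNormalization_support M _)))

theorem Ideal.exists_mem_leadingCoeff_of_monic_mem_map {I : Ideal R[X]} {q : S[X]}
    (hq : q ∈ I.map (mapRingHom (algebraMap R S))) (hmonic : q.Monic) :
    ∃ m ∈ M, m ∈ I.leadingCoeff := by
  obtain ⟨p, hp, m, hm, hpq⟩ := exists_map_eq_C_mul_of_mem_map M hq
  obtain ⟨c, hc, hcp⟩ := IsLocalization.exists_natDegree_C_mul_le (S := S) M p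
  have hdeg : (C c * p).natDegree ≤ q.natDegree :=
    hcp.trans (hpq ▸ natDegree_C_mul_le _ _)
  have hcoeff : algebraMap R S ((C c * p).coeff q.natDegree) = algebraMap R S (c * m) := by
    rw [coeff_C_mul, map_mul, ← coeff_map, hpq, coeff_C_mul, hmonic.coeff_natDegree, mul_one,
      map_mul]
  obtain ⟨e, he⟩ := IsLocalization.exists_of_eq (M := M) hcoeff
  refine ⟨e * (c * m), M.mul_mem e.2 (M.mul_mem hc hm), he ▸ ?_⟩
  exact I.leadingCoeff.mul_mem_left _ (coeff_mem_leadingCoeff (I.mul_mem_left _ hp) hdeg)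

end Localization

/-- Let `R` be a commutative ring and `f 0, …, f (r-1)` elements generating the unit ideal.  If
`I ⊆ R[x]` is an ideal such that for every `i` the ideal generated by the image of `I` in the
localized polynomial ring `R_{f i}[x]` contains a monic polynomial, then `I` contains a monic
polynomial. -/
theorem monic_mem_of_locally_monic (R : Type u) [CommRing R] (r : ℕ) (f : Fin r → R)
    (hf : Ideal.span (Set.range f) = ⊤)
    (I : Ideal (Polynomial R))
    (h : ∀ i : Fin r,
      ∃ q ∈ I.map (Polynomial.mapRingHom (algebraMap R (Localization.Away (f i)))), q.Monic) :
    ∃ q ∈ I, q.Monic := by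
  have hpow : ∀ i, ∃ k : ℕ, f i ^ k ∈ I.leadingCoeff := fun i => by
    obtain ⟨q, hq, hmonic⟩ := h i
    obtain ⟨_, ⟨k, rfl⟩, hk⟩ :=
      I.exists_mem_leadingCoeff_of_monic_mem_map (Submonoid.powers (f i)) hq hmonic
    exact ⟨k, hk⟩
  have htop : I.leadingCoeff = ⊤ := by
    rw [← Ideal.radical_eq_top, eq_top_iff, ← hf, Ideal.span_le]
    rintro _ ⟨i, rfl⟩
    exact hpow i
  exact (I.mem_leadingCoeff 1).mp (htop ▸ Submodule.mem_top)
end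

section
/- Let A be a commutative ring, n ≥ 1 an integer, and X a scheme admitting an immersion into projective n-space ℙⁿ_A over A; that is, X is isomorphic to a closed subscheme of an open subscheme of ℙⁿ_A. Then every finite set of points of X is contained in an affine open subscheme of X. -/
open AlgebraicGeometry CategoryTheory

attribute [local instance] MvPolynomial.gradedAlgebra

universe u

/-!
Let `U` be an open subscheme of `Proj S` and `x₁, …, xᵣ ∈ U`. The ideal `I` of homogeneous
elements vanishing on the complement of `U` is contained in none of the homogeneous primes `xᵢ`,
so graded prime avoidance yields a homogeneous `f ∈ I` of positive degree lying in none of them.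
Then `D₊(f)` is an affine open of `Proj S` inside `U` containing every `xᵢ`. A closed immersion
is affine, so pulling `D₊(f)` back to `X` gives the required affine open.
-/

lemma Ideal.IsHomogeneous.exists_homogeneous_mem_notMem {ι σ R : Type*} [Semiring R]
    [SetLike σ R] [AddSubmonoidClass σ R] {𝒜 : ι → σ} [DecidableEq ι] [AddMonoid ι]
    [GradedRing 𝒜] {I P : Ideal R} (hI : I.IsHomogeneous 𝒜) (h : ¬ I ≤ P) :
    ∃ i, ∃ a ∈ 𝒜 i, a ∈ I ∧ a ∉ P := by
  classical
  obtain ⟨a, haI, haP⟩ := SetLike.not_le_iff_exists.mp h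
  by_contra! hcomp
  refine haP ?_
  rw [← DirectSum.sum_support_decompose 𝒜 a]
  exact P.sum_mem fun i _ => hcomp i _ (SetLike.coe_mem _) (hI i haI)

lemma Ideal.IsHomogeneous.prod {ι σ R : Type*} [CommSemiring R] [SetLike σ R]
    [AddSubmonoidClass σ R] {𝒜 : ι → σ} [DecidableEq ι] [AddMonoid ι] [GradedRing 𝒜]
    {κ : Type*} (s : Finset κ) {I : κ → Ideal R} (hI : ∀ k ∈ s, (I k).IsHomogeneous 𝒜) :
    (∏ k ∈ s, I k).IsHomogeneous 𝒜 :=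
  Finset.prod_induction _ _ (fun _ _ => .mul) (by simpa using .top 𝒜) hI

lemma Ideal.IsPrime.pow_add_pow_notMem {R : Type*} [CommRing R] {p : Ideal R} (hp : p.IsPrime)
    {a b : R} (ha : a ∈ p) (hb : b ∉ p) {m : ℕ} (hm : m ≠ 0) (n : ℕ) : a ^ m + b ^ n ∉ p :=
  fun h => hb <| hp.mem_of_pow_mem n <|
    (p.add_mem_iff_right (p.pow_mem_of_mem ha m (Nat.pos_of_ne_zero hm))).mp h

namespace ProjectiveSpectrum

variable {R σ : Type*} [CommRing R] [SetLike σ R] [AddSubgroupClass σ R] {𝒜 : ℕ → σ}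
  [GradedRing 𝒜]

lemma exists_homogeneous_pos_mem_notMem {I : Ideal R} (hI : I.IsHomogeneous 𝒜)
    (x : ProjectiveSpectrum 𝒜) (hIx : ¬ I ≤ x.asHomogeneousIdeal.toIdeal) :
    ∃ m f, 0 < m ∧ f ∈ 𝒜 m ∧ f ∈ I ∧ f ∉ x.asHomogeneousIdeal := by
  have hJx : ¬ I * (HomogeneousIdeal.irrelevant 𝒜).toIdeal ≤ x.asHomogeneousIdeal.toIdeal := by
    rw [x.isPrime.mul_le]
    exact not_or.mpr ⟨hIx, fun h => x.not_irrelevant_le fun _ ha => h ha⟩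
  obtain ⟨m, f, hf, hfJ, hfx⟩ :=
    (hI.mul (HomogeneousIdeal.irrelevant 𝒜).isHomogeneous).exists_homogeneous_mem_notMem hJx
  refine ⟨m, f, Nat.pos_of_ne_zero fun hm => hfx ?_, hf, Ideal.mul_le_left hfJ, hfx⟩
  have hf₀ : GradedRing.proj 𝒜 0 f = 0 := Ideal.mul_le_right hfJ
  rw [GradedRing.proj_apply, DirectSum.decompose_of_mem_same 𝒜 (hm ▸ hf)] at hf₀
  exact hf₀ ▸ zero_mem _

theorem exists_homogeneous_pos_mem_forall_notMem {I : Ideal R} (hI : I.IsHomogeneous 𝒜)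
    (T : Finset (ProjectiveSpectrum 𝒜)) (hT : T.Nonempty)
    (hIT : ∀ x ∈ T, ¬ I ≤ x.asHomogeneousIdeal.toIdeal) :
    ∃ m f, 0 < m ∧ f ∈ 𝒜 m ∧ f ∈ I ∧ ∀ x ∈ T, f ∉ x.asHomogeneousIdeal := by
  classical
  induction T using Finset.strongInduction with
  | H T ih =>
  obtain ⟨x, hxT, hxmin⟩ := Finset.exists_minimal hT
  have hprod :
      ¬ (∏ y ∈ T.erase x, y.asHomogeneousIdeal.toIdeal) ≤ x.asHomogeneousIdeal.toIdeal := by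
    rw [x.isPrime.prod_le]
    rintro ⟨y, hy, hyx⟩
    exact Finset.ne_of_mem_erase hy (le_antisymm hyx (hxmin (Finset.mem_of_mem_erase hy) hyx))
  obtain ⟨e, g, he, hg, hgJ, hgx⟩ := exists_homogeneous_pos_mem_notMem
    (hI.mul (.prod (T.erase x) fun y _ => y.asHomogeneousIdeal.isHomogeneous)) x
    (by rw [x.isPrime.mul_le]; exact not_or.mpr ⟨hIT x hxT, hprod⟩)
  have hgI : g ∈ I := Ideal.mul_le_left hgJ
  have hgT : ∀ y ∈ T.erase x, g ∈ y.asHomogeneousIdeal :=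
    fun y hy => (Ideal.prod_le_inf.trans (Finset.inf_le hy)) (Ideal.mul_le_right hgJ)
  rcases (T.erase x).eq_empty_or_nonempty with hT₁ | hT₁
  · obtain rfl : T = {x} := ((Finset.erase_eq_empty_iff _ _).mp hT₁).resolve_left hT.ne_empty
    exact ⟨e, g, he, hg, hgI, by simpa using hgx⟩
  obtain ⟨d, f, hd, hf, hfI, hfT⟩ := ih _ (Finset.erase_ssubset hxT) hT₁
    fun y hy => hIT y (Finset.mem_of_mem_erase hy)
  by_cases hfx : f ∈ x.asHomogeneousIdeal
  · -- `f` avoids the other primes and `g` avoids `x`; powers bring both to the degree `d * e`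
    refine ⟨d * e, f ^ e + g ^ d, Nat.mul_pos hd he, add_mem ?_ ?_,
      add_mem (I.pow_mem_of_mem hfI e he) (I.pow_mem_of_mem hgI d hd), fun y hy => ?_⟩
    · simpa [mul_comm] using SetLike.pow_mem_graded e hf
    · simpa using SetLike.pow_mem_graded d hg
    obtain rfl | hyx := eq_or_ne y x
    · exact y.isPrime.pow_add_pow_notMem hfx hgx he.ne' d
    · have hy' := Finset.mem_erase.mpr ⟨hyx, hy⟩
      rw [add_comm]
      exact y.isPrime.pow_add_pow_notMem (hgT y hy') (hfT y hy') hd.ne' e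
  · refine ⟨d, f, hd, hf, hfI, fun y hy => ?_⟩
    obtain rfl | hyx := eq_or_ne y x
    exacts [hfx, hfT y (Finset.mem_erase.mpr ⟨hyx, hy⟩)]

end ProjectiveSpectrum

theorem AlgebraicGeometry.Proj.exists_isAffineOpen_le_of_finite {R σ : Type*} [CommRing R]
    [SetLike σ R] [AddSubgroupClass σ R] (𝒜 : ℕ → σ) [GradedRing 𝒜] (U : (Proj 𝒜).Opens)
    (t : Set (Proj 𝒜)) (ht : t.Finite) (htU : t ⊆ U) :
    ∃ V : (Proj 𝒜).Opens, IsAffineOpen V ∧ V ≤ U ∧ t ⊆ V := by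
  rcases t.eq_empty_or_nonempty with rfl | hne
  · exact ⟨⊥, isAffineOpen_bot _, bot_le, Set.empty_subset _⟩
  set I := ProjectiveSpectrum.vanishingIdeal ((U : Set (Proj 𝒜))ᶜ)
  have hIt : ∀ x ∈ ht.toFinset, ¬ I.toIdeal ≤ x.asHomogeneousIdeal.toIdeal := by
    intro x hx hle
    have hxcl : x ∈ ProjectiveSpectrum.zeroLocus 𝒜 (I : Set R) := fun _ ha => hle ha
    rw [ProjectiveSpectrum.zeroLocus_vanishingIdeal_eq_closure] at hxcl
    exact U.2.isClosed_compl.closure_subset hxcl (htU (ht.mem_toFinset.mp hx))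
  obtain ⟨m, f, hm, hf, hfI, hft⟩ :=
    ProjectiveSpectrum.exists_homogeneous_pos_mem_forall_notMem I.isHomogeneous ht.toFinset
      (ht.toFinset_nonempty.mpr hne) hIt
  refine ⟨basicOpen 𝒜 f, isAffineOpen_basicOpen 𝒜 f hf hm, fun z hz => ?_,
    fun z hz => hft z (ht.mem_toFinset.mpr hz)⟩
  by_contra hzU
  exact hz ((ProjectiveSpectrum.mem_vanishingIdeal _ _).mp hfI z hzU)

/-- Let `A` be a commutative ring and `X` a scheme admitting an immersion into projective
`n`-space `ℙⁿ_A = Proj A[x₀, …, xₙ]`, i.e. `X` is (isomorphic to) a closed subscheme of an open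
subscheme of `ℙⁿ_A`.  Then every finite set of points of `X` is contained in an affine open
subscheme of `X`. -/
theorem finite_set_subset_affine_open_of_quasiProjective
    (A : Type u) [CommRing A] (n : ℕ) (X : Scheme.{u})
    (U : (Proj (MvPolynomial.homogeneousSubmodule (Fin (n + 1)) A)).Opens)
    (g : X ⟶ U.toScheme) [IsClosedImmersion g]
    (s : Set X) (hs : s.Finite) :
    ∃ V : X.Opens, IsAffineOpen V ∧ s ⊆ (V : Set X) := by
  obtain ⟨V, hV, hVU, hsV⟩ := Proj.exists_isAffineOpen_le_of_finite _ U
    (U.ι.base '' (g.base '' s)) ((hs.image _).image _)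
    (by rintro _ ⟨y, -, rfl⟩; exact U.range_ι ▸ Set.mem_range_self y)
  have hV' : IsAffineOpen (U.ι ⁻¹ᵁ V) :=
    hV.preimage_of_isOpenImmersion U.ι (by rwa [U.opensRange_ι])
  exact ⟨g ⁻¹ᵁ (U.ι ⁻¹ᵁ V), hV'.preimage g, fun x hx => hsV ⟨_, ⟨x, hx, rfl⟩, rfl⟩⟩
end
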